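/- For all real numbers x, y > 0 and every κ > 1, the inequality x ≤ κ·y + (1/ln κ)·(y − x)·ln(y/x) holds. -/

import Mathlib

/-! The term `(y - x) * log (y / x)` is never negative, since `log` is increasing. So the
inequality is clear when `x ≤ κ * y`; otherwise `log (x / y) > log κ`, and that term alone
is at least `(x - y) * log κ`. -/

open Real

lemma sub_mul_log_div_nonneg {a b : ℝ} (ha : 0 < a) (hb : 0 < b) :
    0 ≤ (a - b) * log (a / b) := by
  rw [log_div ha.ne' hb.ne']
  rcases le_total a b with hab | hab
  · exact mul_nonneg_of_nonpos_of_nonpos (by linarith) (by linarith [log_le_log ha hab])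
  · exact mul_nonneg (by linarith) (by linarith [log_le_log hb hab])

lemma sub_mul_log_le_sub_mul_log_div_of_mul_lt {κ x y : ℝ} (hκ : 1 ≤ κ) (hy : 0 < y)
    (h : κ * y < x) : (x - y) * log κ ≤ (y - x) * log (y / x) := by
  have hy_le : y ≤ κ * y := le_mul_of_one_le_left hy.le hκ
  have hx : 0 < x := by linarith
  have hlog : log κ ≤ log (x / y) := log_le_log (by linarith) ((le_div_iff₀ hy).mpr h.le)
  calc (x - y) * log κ ≤ (x - y) * log (x / y) :=
        mul_le_mul_of_nonneg_left hlog (by linarith)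
    _ = (y - x) * log (y / x) := by
        rw [log_div hx.ne' hy.ne', log_div hy.ne' hx.ne']; ring

theorem stmt_0 (x y κ : ℝ) (hx : 0 < x) (hy : 0 < y) (hκ : 1 < κ) :
    x ≤ κ * y + (1 / Real.log κ) * (y - x) * Real.log (y / x) := by
  have hlκ : 0 < log κ := log_pos hκ
  rw [mul_assoc, one_div_mul_eq_div]
  rcases le_or_gt x (κ * y) with h | h
  · have := div_nonneg (sub_mul_log_div_nonneg hy hx) hlκ.le
    linarith
  · have hsub : x - y ≤ (y - x) * log (y / x) / log κ :=
      (le_div_iff₀ hlκ).mpr (sub_mul_log_le_sub_mul_log_div_of_mul_lt hκ.le hy h)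
    linarith [le_mul_of_one_le_left hy.le hκ.le]
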